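/- arXiv:2005.10743 — 4 statements merged into one kernel-verified Lean document; each statement's English description precedes it below -/
import Mathlib

section
/- Let $Y$ be the number of fixed points of a uniformly random permutation of $[n]$. Then for any $t \geq 0$, $\mathbb{E}[e^{tY}] \leq \exp(e^t - 1)$, i.e., the moment generating function of $Y$ is dominated by that of a Poisson(1) random variable. -/
/-!
Write `e^t = x + 1` with `x = e^t - 1 ≥ 0`. Expanding `(x + 1)^Y` over the subsets of the fixed
points and exchanging the sums, a set `S` of size `j` is fixed by `(n - j)!` permutations, so
`∑_σ e^{t Y(σ)} = ∑_j (n choose j) (n - j)! x^j = n! ∑_{j ≤ n} x^j / j!`, a truncation of the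
exponential series of `x`.
-/

open Finset Nat

section FixedPoints

variable {α : Type*} [Fintype α] [DecidableEq α]

theorem card_perm_fixing (s : Finset α) :
    #{σ : Equiv.Perm α | ∀ i ∈ s, σ i = i} = (Fintype.card α - #s)! := by
  rw [← Fintype.card_subtype]
  have e : {σ : Equiv.Perm α // ∀ i ∈ s, σ i = i} ≃ Equiv.Perm {i // i ∉ s} :=
    (Equiv.subtypeEquivRight fun σ => by simp only [not_not]).trans
      (Equiv.Perm.subtypeEquivSubtypePerm _).symm
  rw [Fintype.card_congr e, Fintype.card_perm, Fintype.card_subtype_compl, Fintype.card_coe]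

theorem sum_perm_add_one_pow_card_fixed {R : Type*} [CommSemiring R] (x : R) :
    ∑ σ : Equiv.Perm α, (x + 1) ^ #{i | σ i = i} =
      ∑ u : Finset α, (Fintype.card α - #u)! * x ^ #u := by
  calc ∑ σ : Equiv.Perm α, (x + 1) ^ #{i | σ i = i}
      = ∑ σ : Equiv.Perm α, ∑ u ∈ ({i | σ i = i} : Finset α).powerset, x ^ #u := by
        simp_rw [← sum_pow_mul_eq_add_pow, one_pow, mul_one]
    _ = ∑ u : Finset α, ∑ _σ ∈ {σ : Equiv.Perm α | ∀ i ∈ u, σ i = i}, x ^ #u :=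
        sum_comm' fun σ u => by simp [subset_iff]
    _ = _ := by simp [card_perm_fixing]

theorem sum_perm_add_one_pow_card_fixed_eq_factorial_mul (x : ℝ) :
    ∑ σ : Equiv.Perm α, (x + 1) ^ #{i | σ i = i} =
      (Fintype.card α)! * ∑ j ∈ range (Fintype.card α + 1), x ^ j / j ! := by
  rw [sum_perm_add_one_pow_card_fixed, ← powerset_univ,
    sum_powerset_apply_card (fun j => ((Fintype.card α - j)! : ℝ) * x ^ j), Finset.card_univ, mul_sum]
  refine sum_congr rfl fun j hj => ?_
  have hjn : j ≤ Fintype.card α := Nat.lt_succ_iff.mp (mem_range.mp hj)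
  rw [nsmul_eq_mul, Nat.cast_choose ℝ hjn]
  field_simp

end FixedPoints

/-- The moment generating function of the number of fixed points `Y` of a uniformly
random permutation of `[n]` is dominated by that of a `Poisson(1)` random variable:
`E[e^{tY}] ≤ exp(e^t - 1)` for all `t ≥ 0`. -/
theorem stmt_3 (n : ℕ) (t : ℝ) (ht : 0 ≤ t) :
    ((Fintype.card (Equiv.Perm (Fin n)) : ℝ))⁻¹ *
        ∑ σ : Equiv.Perm (Fin n),
          Real.exp (t * ((Finset.univ.filter fun i => σ i = i).card : ℝ)) ≤
      Real.exp (Real.exp t - 1) := by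
  have hexp (k : ℕ) : Real.exp (t * k) = (Real.exp t - 1 + 1) ^ k := by
    rw [mul_comm, Real.exp_nat_mul, sub_add_cancel]
  simp_rw [hexp, sum_perm_add_one_pow_card_fixed_eq_factorial_mul, Fintype.card_perm,
    Fintype.card_fin]
  rw [inv_mul_cancel_left₀ (by positivity)]
  exact Real.sum_le_exp_of_nonneg (sub_nonneg.2 (Real.one_le_exp ht)) _
end

section
/- Let $H \sim \mathrm{Hypergeometric}(n,k,k)$, let $G_m$ be a symmetric $\pm 1$ random walk stopped at step $m$ (independent of $H$), and fix $d \geq 2$. There exists a small constant $c > 0$ and a function $g : (0,c) \to (1,\infty)$ with $g(0+) = 1$ such that for every $a \in (0,c)$, setting $t = \frac{a}{k^{d-1}}\log\frac{en}{k}$, we have $\mathbb{E}[\exp(t G_H^d)] \leq g(a)$. -/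
open Filter Finset Real

/-!
Split according to whether `8 t H^{d-1} ≤ 1`. On that event `t G_H^d ≤ σ G_H^2` with
`σ = t H^{d-2}`, and peeling off one step at a time shows that `σ G_h^2` has MGF at most
`exp (2 σ h)`; this contributes `1 + O(a log(en/k) E[H] / k) = 1 + O(a)` since `E[H] = k²/n`.
Otherwise `H ≥ k / (8 a log(en/k))`, the walk is bounded crudely by `|G_H| ≤ H`, and the
hypergeometric tail `P(H = h) ≤ (ek/h)^h (k/(n-k+1))^h` beats `exp(a h log(en/k))`, leaving a
geometric series `∑ (256 a)^h`.

Below, `walkMean h f = E f(G_h)` and `hypergeomWeight n k h = P(H = h)`.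
-/

def signSum {h : ℕ} (ε : Fin h → Bool) : ℝ := ∑ i, if ε i then 1 else -1

noncomputable def walkMean (h : ℕ) (f : ℝ → ℝ) : ℝ :=
  ((2:ℝ) ^ h)⁻¹ * ∑ ε : Fin h → Bool, f (signSum ε)

lemma abs_signSum_le {h : ℕ} (ε : Fin h → Bool) : |signSum ε| ≤ h :=
  calc |signSum ε| ≤ ∑ i, |if ε i then (1:ℝ) else -1| := abs_sum_le_sum_abs _ _
    _ = h := by simp [apply_ite]

lemma walkMean_const (h : ℕ) (c : ℝ) : walkMean h (fun _ => c) = c := by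
  simp [walkMean]

lemma walkMean_const_mul (h : ℕ) (c : ℝ) (f : ℝ → ℝ) :
    walkMean h (fun x => c * f x) = c * walkMean h f := by
  simp only [walkMean, ← mul_sum]
  ring

lemma walkMean_mono {h : ℕ} {f g : ℝ → ℝ} (hfg : ∀ x, |x| ≤ (h : ℝ) → f x ≤ g x) :
    walkMean h f ≤ walkMean h g := by
  unfold walkMean
  gcongr with ε
  exact hfg _ (abs_signSum_le ε)

lemma walkMean_succ (h : ℕ) (f : ℝ → ℝ) :
    walkMean (h + 1) f = walkMean h (fun x => (f (1 + x) + f (-1 + x)) / 2) := by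
  have hsum : ∑ ε : Fin (h + 1) → Bool, f (signSum ε)
      = ∑ ε : Fin h → Bool, (f (1 + signSum ε) + f (-1 + signSum ε)) := by
    rw [← (Fin.consEquiv fun _ => Bool).sum_comp, Fintype.sum_prod_type, Finset.sum_comm]
    simp [Fin.consEquiv, signSum, Fin.sum_univ_succ]
  simp only [walkMean, hsum, ← sum_div, pow_succ]
  ring

lemma exp_mul_one_add_sq_add_exp_mul_neg_one_add_sq_le (σ x : ℝ) :
    (exp (σ * (1 + x) ^ 2) + exp (σ * (-1 + x) ^ 2)) / 2
      ≤ exp σ * exp ((σ + 2 * σ ^ 2) * x ^ 2) :=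
  calc (exp (σ * (1 + x) ^ 2) + exp (σ * (-1 + x) ^ 2)) / 2
      = exp (σ * x ^ 2 + σ) * cosh (2 * σ * x) := by
        rw [cosh_eq, mul_div_assoc', mul_add, ← exp_add, ← exp_add]
        ring_nf
    _ ≤ exp (σ * x ^ 2 + σ) * exp ((2 * σ * x) ^ 2 / 2) := by
        gcongr
        exact cosh_le_exp_half_sq _
    _ = exp σ * exp ((σ + 2 * σ ^ 2) * x ^ 2) := by
        rw [← exp_add, ← exp_add]
        ring_nf

lemma walkMean_exp_mul_sq_le (h : ℕ) {σ : ℝ} (hσ : 0 ≤ σ) (hσh : 8 * σ * h ≤ 1) :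
    walkMean h (fun x => exp (σ * x ^ 2)) ≤ exp (2 * σ * h) := by
  induction h generalizing σ with
  | zero => simp [walkMean, signSum]
  | succ m ih =>
    push_cast at hσh
    have hσ' : 0 ≤ σ + 2 * σ ^ 2 := by positivity
    have hσ'm : 8 * (σ + 2 * σ ^ 2) * m ≤ 1 := by nlinarith
    calc walkMean (m + 1) (fun x => exp (σ * x ^ 2))
        ≤ walkMean m (fun x => exp σ * exp ((σ + 2 * σ ^ 2) * x ^ 2)) := by
          rw [walkMean_succ]
          exact walkMean_mono fun x _ => exp_mul_one_add_sq_add_exp_mul_neg_one_add_sq_le σ x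
      _ ≤ exp σ * exp (2 * (σ + 2 * σ ^ 2) * m) := by
          rw [walkMean_const_mul]
          gcongr
          exact ih hσ' hσ'm
      _ ≤ exp (2 * σ * (m + 1 : ℕ)) := by
          rw [← exp_add, exp_le_exp]
          push_cast
          nlinarith [mul_nonneg hσ (Nat.cast_nonneg (α := ℝ) m)]

lemma exp_le_one_add_two_mul {x : ℝ} (hx0 : 0 ≤ x) (hx : x ≤ 1 / 2) :
    exp x ≤ 1 + 2 * x := by
  have hpos : 0 < 1 - x := by linarith
  calc exp x ≤ 1 / (1 - x) := exp_bound_div_one_sub_of_interval hx0 (by linarith)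
    _ ≤ 1 + 2 * x := by
        rw [div_le_iff₀ hpos]
        nlinarith

lemma walkMean_exp_mul_pow_le (h d : ℕ) {t : ℝ} (ht : 0 ≤ t) :
    walkMean h (fun x => exp (t * x ^ d)) ≤ exp (t * h ^ d) := by
  rw [← walkMean_const h (exp (t * h ^ d))]
  refine walkMean_mono fun x hx => exp_le_exp.2 (mul_le_mul_of_nonneg_left ?_ ht)
  calc x ^ d ≤ |x| ^ d := by rw [← abs_pow]; exact le_abs_self _
    _ ≤ h ^ d := by gcongr

lemma walkMean_exp_mul_pow_le_of_small (h : ℕ) {d : ℕ} (hd : 2 ≤ d) {t : ℝ} (ht : 0 ≤ t)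
    (hsmall : 8 * (t * h ^ (d - 1)) ≤ 1) :
    walkMean h (fun x => exp (t * x ^ d)) ≤ 1 + 4 * (t * h ^ (d - 1)) := by
  obtain ⟨e, rfl⟩ := Nat.exists_eq_add_of_le' hd
  have hσh : t * h ^ e * h = t * h ^ (e + 2 - 1) := by
    rw [show e + 2 - 1 = e + 1 by omega, pow_succ]; ring
  calc walkMean h (fun x => exp (t * x ^ (e + 2)))
      ≤ walkMean h (fun x => exp (t * h ^ e * x ^ 2)) := by
        refine walkMean_mono fun x hx => ?_
        rw [exp_le_exp, mul_assoc]
        gcongr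
        calc x ^ (e + 2) ≤ |x| ^ e * x ^ 2 := by
              rw [← sq_abs x, ← pow_add, ← abs_pow]; exact le_abs_self _
          _ ≤ h ^ e * x ^ 2 := by gcongr
    _ ≤ exp (2 * (t * h ^ e) * h) :=
        walkMean_exp_mul_sq_le h (by positivity) (by rw [mul_assoc, hσh]; linarith)
    _ ≤ 1 + 4 * (t * h ^ (e + 2 - 1)) := by
        rw [mul_assoc, hσh]
        linarith [exp_le_one_add_two_mul (x := 2 * (t * h ^ (e + 2 - 1)))
          (by positivity) (by linarith)]

theorem Nat.sum_range_choose_mul_choose (k m : ℕ) :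
    ∑ h ∈ range (k + 1), k.choose h * m.choose (k - h) = (k + m).choose k := by
  rw [Nat.add_choose_eq, Finset.Nat.sum_antidiagonal_eq_sum_range_succ_mk]

theorem Nat.sum_range_mul_choose_mul_choose (k m : ℕ) :
    ∑ h ∈ range (k + 2), h * ((k + 1).choose h * m.choose (k + 1 - h))
      = (k + 1) * (k + m).choose k := by
  rw [sum_range_succ', ← Nat.sum_range_choose_mul_choose, mul_sum]
  simp only [zero_mul, add_zero]
  refine sum_congr rfl fun i _ => ?_
  rw [Nat.add_sub_add_right, ← mul_assoc, mul_comm (i + 1), ← Nat.add_one_mul_choose_eq]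
  ring

theorem Nat.choose_sub_mul_pow_le {n k h : ℕ} (hhk : h ≤ k) (hkn : k ≤ n) :
    n.choose (k - h) * (n - k + 1) ^ h ≤ n.choose k * k ^ h := by
  induction h with
  | zero => simp
  | succ m ih =>
    have hstep : n.choose (k - (m + 1)) * (n - k + 1) ≤ n.choose (k - m) * k :=
      calc n.choose (k - (m + 1)) * (n - k + 1)
          ≤ n.choose (k - (m + 1)) * (n - (k - (m + 1))) := by gcongr; omega
        _ = n.choose (k - m) * (k - m) := by
            rw [← Nat.choose_succ_right_eq, show k - (m + 1) + 1 = k - m by omega]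
        _ ≤ n.choose (k - m) * k := by gcongr; omega
    calc n.choose (k - (m + 1)) * (n - k + 1) ^ (m + 1)
        = n.choose (k - (m + 1)) * (n - k + 1) * (n - k + 1) ^ m := by ring
      _ ≤ n.choose (k - m) * k * (n - k + 1) ^ m := by gcongr
      _ = n.choose (k - m) * (n - k + 1) ^ m * k := by ring
      _ ≤ n.choose k * k ^ m * k := Nat.mul_le_mul_right _ (ih (by omega))
      _ = n.choose k * k ^ (m + 1) := by ring

theorem Nat.choose_le_exp_one_mul_div_pow (k h : ℕ) :
    (k.choose h : ℝ) ≤ (exp 1 * k / h) ^ h := by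
  rcases Nat.eq_zero_or_pos h with rfl | hh
  · simp
  have hfac : (h : ℝ) ^ h ≤ exp 1 ^ h * h.factorial := by
    rw [exp_one_pow, ← div_le_iff₀ (by positivity)]
    exact pow_div_factorial_le_exp _ (Nat.cast_nonneg h) h
  calc (k.choose h : ℝ) ≤ k ^ h / h.factorial := Nat.choose_le_pow_div h k
    _ ≤ (exp 1 * k / h) ^ h := by
        rw [div_pow, mul_pow, div_le_div_iff₀ (by positivity) (by positivity)]
        calc (k : ℝ) ^ h * h ^ h ≤ k ^ h * (exp 1 ^ h * h.factorial) := by gcongr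
          _ = exp 1 ^ h * k ^ h * h.factorial := by ring

noncomputable def hypergeomWeight (n k h : ℕ) : ℝ :=
  ((k.choose h * (n - k).choose (k - h) : ℕ) : ℝ) / n.choose k

lemma hypergeomWeight_nonneg (n k h : ℕ) : 0 ≤ hypergeomWeight n k h := by
  unfold hypergeomWeight; positivity

lemma sum_hypergeomWeight {n k : ℕ} (hkn : k ≤ n) :
    ∑ h ∈ range (k + 1), hypergeomWeight n k h = 1 := by
  obtain ⟨m, rfl⟩ := Nat.exists_eq_add_of_le hkn
  have hpos : (0 : ℝ) < (k + m).choose k := by exact_mod_cast Nat.choose_pos hkn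
  simp only [hypergeomWeight, ← sum_div, ← Nat.cast_sum, Nat.add_sub_cancel_left,
    Nat.sum_range_choose_mul_choose]
  exact div_self hpos.ne'

lemma sum_mul_hypergeomWeight {n k : ℕ} (hk : 0 < k) (hkn : k ≤ n) :
    ∑ h ∈ range (k + 1), (h : ℝ) * hypergeomWeight n k h = k ^ 2 / n := by
  obtain ⟨m, rfl⟩ := Nat.exists_eq_add_of_le hkn
  obtain ⟨j, rfl⟩ := Nat.exists_eq_add_of_le' hk
  have hmean := Nat.sum_range_mul_choose_mul_choose j m
  have habsorb := Nat.add_one_mul_choose_eq (j + m) j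
  rw [show j + m + 1 = j + 1 + m by ring] at habsorb
  have hpos : (0 : ℝ) < (j + 1 + m).choose (j + 1) := by exact_mod_cast Nat.choose_pos (by omega)
  have key : (∑ h ∈ range (j + 2), h * ((j + 1).choose h * m.choose (j + 1 - h))) * (j + 1 + m)
      = (j + 1) ^ 2 * (j + 1 + m).choose (j + 1) := by
    rw [hmean, mul_assoc, mul_comm ((j + m).choose j), habsorb]; ring
  simp only [hypergeomWeight, mul_div_assoc', ← sum_div, Nat.add_sub_cancel_left]
  rw [div_eq_div_iff hpos.ne' (by positivity)]
  exact_mod_cast key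

lemma hypergeomWeight_le {n k h : ℕ} (hhk : h ≤ k) (hkn : k ≤ n) :
    hypergeomWeight n k h ≤ (exp 1 * k / h) ^ h * (k / ((n : ℝ) - k + 1)) ^ h := by
  have hpos : (0 : ℝ) < n.choose k := by exact_mod_cast Nat.choose_pos hkn
  have hnk : (0 : ℝ) < n - k + 1 := by
    have : (k : ℝ) ≤ n := by exact_mod_cast hkn
    linarith
  have hnat : (n - k).choose (k - h) * (n - k + 1) ^ h ≤ n.choose k * k ^ h :=
    le_trans (by gcongr; exact Nat.sub_le n k) (Nat.choose_sub_mul_pow_le hhk hkn)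
  have hratio : ((n - k).choose (k - h) : ℝ) / n.choose k ≤ (k / ((n : ℝ) - k + 1)) ^ h := by
    rw [div_pow, div_le_div_iff₀ hpos (by positivity)]
    have := (Nat.cast_le (α := ℝ)).2 hnat
    push_cast [Nat.cast_sub hkn] at this
    linarith
  calc hypergeomWeight n k h = k.choose h * (((n - k).choose (k - h) : ℝ) / n.choose k) := by
        rw [hypergeomWeight]; push_cast; ring
    _ ≤ (exp 1 * k / h) ^ h * (k / ((n : ℝ) - k + 1)) ^ h := by
        gcongr
        exact Nat.choose_le_exp_one_mul_div_pow k h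

lemma exp_one_mul_mul_mul_exp_le {a y r s : ℝ} (ha0 : 0 < a) (ha : a ≤ 1 / 2) (hy : 0 ≤ y)
    (hr : r ≤ 8 * a * (1 + y)) (hs0 : 0 ≤ s) (hs : s ≤ 2 * exp (-y)) :
    exp 1 * r * s * exp (a * (1 + y)) ≤ 256 * a := by
  have hy1 : 1 + y ≤ 2 * exp (y / 2) := by linarith [add_one_le_exp (y / 2)]
  have he2 : exp 2 ≤ 8 := by
    rw [show (2 : ℝ) = 1 + 1 by norm_num, exp_add]
    nlinarith [exp_one_lt_d9, exp_pos 1]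
  calc exp 1 * r * s * exp (a * (1 + y))
      ≤ exp 1 * (8 * a * (2 * exp (y / 2))) * (2 * exp (-y)) * exp (a * (1 + y)) := by
        gcongr
        exact hr.trans (by gcongr)
    _ = 32 * a * exp (1 + y / 2 + -y + a * (1 + y)) := by
        simp only [exp_add]; ring
    _ ≤ 32 * a * exp 2 := by
        gcongr
        nlinarith
    _ ≤ 256 * a := by nlinarith

lemma log_exp_one_mul_div {n k : ℕ} (hk : 0 < k) (hkn : k ≤ n) :
    log (exp 1 * n / k) = 1 + log (n / k) := by
  have : (0 : ℝ) < n := by exact_mod_cast hk.trans_le hkn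
  rw [mul_div_assoc, log_mul (exp_pos 1).ne' (by positivity), log_exp]

lemma log_natCast_div_nonneg {n k : ℕ} (hk : 0 < k) (hkn : k ≤ n) : 0 ≤ log (n / k : ℝ) :=
  log_nonneg ((one_le_div (by exact_mod_cast hk)).2 (by exact_mod_cast hkn))

lemma hypergeomWeight_mul_exp_le {a : ℝ} {n k h : ℕ} (ha0 : 0 < a) (ha : a ≤ 1 / 512)
    (hh : 0 < h) (hhk : h ≤ k) (hkn : k ≤ n)
    (hkh : (k : ℝ) / h ≤ 8 * a * log (exp 1 * n / k)) :
    hypergeomWeight n k h * exp (a * log (exp 1 * n / k) * h) ≤ (256 * a) ^ h := by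
  have hk : 0 < k := hh.trans_le hhk
  have hk0 : (0 : ℝ) < k := by exact_mod_cast hk
  have hn0 : (0 : ℝ) < n := by exact_mod_cast hk.trans_le hkn
  have hden : (0 : ℝ) < n - k + 1 := by linarith [(Nat.cast_le (α := ℝ)).2 hkn]
  set y := log (n / k : ℝ)
  have hexp_y : exp y = n / k := exp_log (by positivity)
  have hy : 0 ≤ y := log_natCast_div_nonneg hk hkn
  rw [log_exp_one_mul_div hk hkn] at hkh ⊢
  have hkh1 : (1 : ℝ) ≤ k / h := by
    rw [le_div_iff₀ (by exact_mod_cast hh)]; exact_mod_cast by linarith [hhk]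
  -- the tail event forces `n / k = exp y ≥ 1 + y ≥ 64`, so `n - k + 1 ≥ n / 2`
  have hnk : (k : ℝ) / (n - k + 1) ≤ 2 * exp (-y) := by
    have h64 : 64 ≤ 1 + y := by nlinarith
    have : 2 * (k : ℝ) ≤ n := by
      have := add_one_le_exp y
      rw [hexp_y, le_div_iff₀ hk0] at this
      nlinarith
    rw [exp_neg, hexp_y, inv_div, div_le_iff₀ hden,
      show 2 * (k / n) * (n - k + 1 : ℝ) = k * (2 * (n - k + 1) / n) by ring]
    exact le_mul_of_one_le_right hk0.le (by rw [le_div_iff₀ hn0]; linarith)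
  calc hypergeomWeight n k h * exp (a * (1 + y) * h)
      ≤ (exp 1 * k / h) ^ h * (k / ((n : ℝ) - k + 1)) ^ h * exp (a * (1 + y)) ^ h := by
        rw [← exp_nat_mul, mul_comm (h : ℝ)]
        gcongr
        exact hypergeomWeight_le hhk hkn
    _ = (exp 1 * (k / h) * (k / ((n : ℝ) - k + 1)) * exp (a * (1 + y))) ^ h := by
        rw [← mul_pow, ← mul_pow, mul_div_assoc]
    _ ≤ (256 * a) ^ h := by
        refine pow_le_pow_left₀ (by positivity) ?_ h
        exact exp_one_mul_mul_mul_exp_le ha0 (by linarith) hy hkh (by positivity) hnk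

lemma div_pow_mul_pow_le {c x y : ℝ} (hc : 0 ≤ c) (hx : 0 ≤ x) (hxy : x ≤ y) (hy : 0 < y)
    {m : ℕ} (hm : m ≠ 0) : c / y ^ m * x ^ m ≤ c * x / y :=
  calc c / y ^ m * x ^ m = c * (x / y) ^ m := by rw [div_pow]; ring
    _ ≤ c * (x / y) := by
        gcongr
        exact pow_le_of_le_one (by positivity) ((div_le_one hy).2 hxy) hm
    _ = c * x / y := mul_div_assoc' _ _ _

lemma hypergeomWeight_mul_walkMean_le {a : ℝ} {n k d h : ℕ} (hd : 2 ≤ d) (ha0 : 0 < a)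
    (ha : a ≤ 1 / 512) (hk : 0 < k) (hkn : k ≤ n) (hhk : h ≤ k) :
    hypergeomWeight n k h *
        walkMean h (fun x => exp (a / (k : ℝ) ^ (d - 1) * log (exp 1 * n / k) * x ^ d))
      ≤ hypergeomWeight n k h * (1 + 4 * a * log (exp 1 * n / k) / k * h)
        + 512 * a * (1 / 2) ^ h := by
  set L := log (exp 1 * n / k) with hL
  have hk0 : (0 : ℝ) < k := by exact_mod_cast hk
  have hhk' : (h : ℝ) ≤ k := by exact_mod_cast hhk
  have hL0 : 0 ≤ L := by
    rw [hL, log_exp_one_mul_div hk hkn]; linarith [log_natCast_div_nonneg hk hkn]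
  set t := a / (k : ℝ) ^ (d - 1) * L
  have ht : 0 ≤ t := by positivity
  have hth : t * h ^ (d - 1) ≤ a * L * h / k := by
    simpa only [t, div_mul_eq_mul_div] using
      div_pow_mul_pow_le (by positivity) (Nat.cast_nonneg h) hhk' hk0 (by omega : d - 1 ≠ 0)
  have hw := hypergeomWeight_nonneg n k h
  by_cases hsmall : 8 * (t * h ^ (d - 1)) ≤ 1
  · calc hypergeomWeight n k h * walkMean h (fun x => exp (t * x ^ d))
        ≤ hypergeomWeight n k h * (1 + 4 * (t * h ^ (d - 1))) := by
          gcongr; exact walkMean_exp_mul_pow_le_of_small h hd ht hsmall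
      _ ≤ hypergeomWeight n k h * (1 + 4 * a * L / k * h) := by
          rw [show 4 * a * L / k * h = 4 * (a * L * h / k) by ring]
          gcongr
      _ ≤ _ := le_add_of_nonneg_right (by positivity)
  · have hh : 0 < h := by
      rcases Nat.eq_zero_or_pos h with rfl | hh
      · simp [zero_pow (show d - 1 ≠ 0 by omega)] at hsmall
      · exact hh
    have hkh : (k : ℝ) / h ≤ 8 * a * L := by
      rw [div_le_iff₀ (by exact_mod_cast hh)]
      have : 1 < 8 * (a * L * h / k) := by linarith
      rw [← mul_div_assoc, lt_div_iff₀ hk0] at this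
      linarith
    have htd : t * h ^ d ≤ a * L * h := by
      rw [← pow_sub_one_mul (by omega : d ≠ 0), ← mul_assoc]
      calc t * h ^ (d - 1) * h ≤ a * L * h / k * h := by gcongr
        _ ≤ a * L * h := by
            rw [div_mul_eq_mul_div, div_le_iff₀ hk0]
            exact mul_le_mul_of_nonneg_left hhk' (by positivity)
    calc hypergeomWeight n k h * walkMean h (fun x => exp (t * x ^ d))
        ≤ hypergeomWeight n k h * exp (a * L * h) := by
          gcongr
          exact (walkMean_exp_mul_pow_le h d ht).trans (exp_le_exp.2 htd)
      _ ≤ (256 * a) ^ h := hypergeomWeight_mul_exp_le ha0 ha hh hhk hkn hkh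
      _ = (512 * a) ^ h * (1 / 2) ^ h := by rw [← mul_pow]; ring_nf
      _ ≤ 512 * a * (1 / 2) ^ h := by
          gcongr
          exact pow_le_of_le_one (by positivity) (by linarith) hh.ne'
      _ ≤ _ := le_add_of_nonneg_left (by positivity)

lemma sum_hypergeomWeight_mul_walkMean_le {a : ℝ} {n k d : ℕ} (hd : 2 ≤ d) (ha0 : 0 < a)
    (ha : a ≤ 1 / 512) (hk : 0 < k) (hkn : k ≤ n) :
    ∑ h ∈ range (k + 1), hypergeomWeight n k h *
        walkMean h (fun x => exp (a / (k : ℝ) ^ (d - 1) * log (exp 1 * n / k) * x ^ d))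
      ≤ 1 + 1028 * a := by
  set L := log (exp 1 * n / k) with hL
  have hk0 : (0 : ℝ) < k := by exact_mod_cast hk
  have hn0 : (0 : ℝ) < n := by exact_mod_cast hk.trans_le hkn
  have hLk : L * k / n ≤ 1 := by
    have : log (n / k : ℝ) ≤ n / k - 1 := log_le_sub_one_of_pos (by positivity)
    rw [div_le_one hn0, ← le_div_iff₀ hk0, hL, log_exp_one_mul_div hk hkn]
    linarith
  calc ∑ h ∈ range (k + 1), hypergeomWeight n k h *
        walkMean h (fun x => exp (a / (k : ℝ) ^ (d - 1) * L * x ^ d))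
      ≤ ∑ h ∈ range (k + 1),
          (hypergeomWeight n k h * (1 + 4 * a * L / k * h) + 512 * a * (1 / 2) ^ h) :=
        sum_le_sum fun h hh =>
          hypergeomWeight_mul_walkMean_le hd ha0 ha hk hkn (Nat.lt_succ_iff.1 (mem_range.1 hh))
    _ = ∑ h ∈ range (k + 1), hypergeomWeight n k h
          + 4 * a * L / k * ∑ h ∈ range (k + 1), (h : ℝ) * hypergeomWeight n k h
          + 512 * a * ∑ h ∈ range (k + 1), (1 / 2 : ℝ) ^ h := by
        simp only [sum_add_distrib, mul_sum, mul_add, mul_one]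
        congr 2
        exact sum_congr rfl fun h _ => by ring
    _ ≤ 1 + 4 * a * L / k * (k ^ 2 / n) + 512 * a * 2 := by
        rw [sum_hypergeomWeight hkn, sum_mul_hypergeomWeight hk hkn]
        gcongr
        exact sum_geometric_two_le _
    _ = 1 + 4 * a * (L * k / n) + 1024 * a := by field_simp; ring
    _ ≤ 1 + 1028 * a := by nlinarith

/-- MGF bound for a power of a stopped random walk (Lemma on `E exp(t G_H^d)`).
Fix `d ≥ 2`.  There are `c > 0` and `g : (0, c) → (1, ∞)` with `g(0+) = 1` such that
for every `a ∈ (0, c)`, for all sufficiently large `k` and all `n ≥ k`, taking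
`t = (a/k^{d-1}) log(en/k)`, `H ∼ Hypergeometric(n, k, k)` and `G_h` the symmetric
`±1` random walk stopped at step `h` (independent of `H`):
`E[exp(t G_H^d)] ≤ g(a)`. -/
theorem stmt_15 (d : ℕ) (hd : 2 ≤ d) :
    ∃ c > (0:ℝ), ∃ g : ℝ → ℝ,
      (∀ a : ℝ, 0 < a → a < c → 1 < g a) ∧
      Tendsto g (nhdsWithin 0 (Set.Ioi 0)) (nhds 1) ∧
      ∀ a : ℝ, 0 < a → a < c → ∃ k₀ : ℕ, ∀ n k : ℕ, k₀ ≤ k → k ≤ n →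
        ∑ h ∈ Finset.range (k + 1),
          (((k.choose h * (n - k).choose (k - h) : ℕ) : ℝ) / (n.choose k)) *
            (((2:ℝ) ^ h)⁻¹ *
              ∑ ε : Fin h → Bool,
                Real.exp ((a / (k : ℝ) ^ (d - 1) *
                    Real.log (Real.exp 1 * n / k)) *
                  (∑ i, (if ε i then (1:ℝ) else -1)) ^ d)) ≤ g a := by
  refine ⟨1 / 512, by norm_num, fun a => 1 + 1028 * a, fun a ha _ => by linarith, ?_,
    fun a ha hac => ⟨1, fun n k hk hkn =>
      sum_hypergeomWeight_mul_walkMean_le hd ha hac.le hk hkn⟩⟩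
  have hcont : Continuous fun a : ℝ => 1 + 1028 * a := by fun_prop
  simpa using (hcont.tendsto 0).mono_left nhdsWithin_le_nhds
end

section
/- Let $X \sim \mathrm{Hypergeometric}(n,k,k)$ and $Y \sim \mathrm{Binomial}(k, \frac{k}{n-k})$ where $n \geq 2k$. Then $Y$ stochastically dominates $X$; consequently for every nondecreasing function $f$, $\mathbb{E}[f(X)] \leq \mathbb{E}[f(Y)]$, and in particular $\mathbb{E}[e^{sX}] \leq (1 + \frac{k}{n-k}(e^s - 1))^k$ for any $s \geq 0$. -/
/-!
Both laws live on `{0, …, k}` and their likelihood ratio is monotone: for `x < k`,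
`P(X = x+1) / P(X = x) ≤ P(Y = x+1) / P(Y = x)`, which after cancelling `C(k, x+1) / C(k, x)`
is the inequality `(n - 2k) C(n-k, k-x-1) ≤ k C(n-k, k-x)`. Hence the two mass functions cross
only once, from `P(X = x) ≥ P(Y = x)` to `P(X = x) ≤ P(Y = x)`, and since both have total mass
one every upper tail of `X` is at most the corresponding tail of `Y`. Summation by parts turns
tail dominance into `E f(X) ≤ E f(Y)` for monotone `f`, and `f = exp (s ·)` gives the MGF bound.
-/

open Finset

section SingleCrossing

variable {p b : ℕ → ℝ} {k : ℕ}

theorem exists_single_crossing (hup : ∀ x < k, p x ≤ b x → p (x + 1) ≤ b (x + 1)) :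
    ∃ m ≤ k + 1, (∀ x < m, b x ≤ p x) ∧ ∀ x, m ≤ x → x ≤ k → p x ≤ b x := by
  classical
  have hex : ∃ x, k < x ∨ p x ≤ b x := ⟨k + 1, Or.inl k.lt_succ_self⟩
  refine ⟨Nat.find hex, Nat.find_min' hex (Or.inl k.lt_succ_self), fun x hx => ?_,
    fun x hmx => ?_⟩
  · have h := Nat.find_min hex hx
    push Not at h
    exact h.2.le
  · induction x, hmx using Nat.le_induction with
    | base =>
      intro hmk
      exact (Nat.find_spec hex).resolve_left (by omega)
    | succ x _ ih =>
      intro hxk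
      exact hup x (by omega) (ih (by omega))

theorem sum_Ico_le_of_single_crossing
    (hsum : ∑ x ∈ range (k + 1), p x = ∑ x ∈ range (k + 1), b x)
    {m : ℕ} (hm : m ≤ k + 1) (hbelow : ∀ x < m, b x ≤ p x)
    (habove : ∀ x, m ≤ x → x ≤ k → p x ≤ b x) (t : ℕ) :
    ∑ x ∈ Ico t (k + 1), p x ≤ ∑ x ∈ Ico t (k + 1), b x := by
  rcases le_or_gt t m with htm | hmt
  · have hhead : ∑ x ∈ range t, b x ≤ ∑ x ∈ range t, p x :=
      sum_le_sum fun x hx => hbelow x (by simp at hx; omega)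
    have hp := sum_range_add_sum_Ico p (htm.trans hm)
    have hb := sum_range_add_sum_Ico b (htm.trans hm)
    linarith
  · exact sum_le_sum fun x hx => habove x (by simp at hx; omega) (by simp at hx; omega)

theorem succ_le_of_mul_le_mul {x : ℕ} (hp : 0 < p x) (hb : 0 ≤ b (x + 1))
    (hratio : p (x + 1) * b x ≤ p x * b (x + 1)) (hle : p x ≤ b x) :
    p (x + 1) ≤ b (x + 1) := by
  have hbx : 0 < b x := hp.trans_le hle
  refine le_of_mul_le_mul_right ?_ hbx
  calc p (x + 1) * b x ≤ p x * b (x + 1) := hratio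
    _ ≤ b x * b (x + 1) := mul_le_mul_of_nonneg_right hle hb
    _ = b (x + 1) * b x := mul_comm _ _

/-- Monotone likelihood ratio implies dominance of the upper tails. -/
theorem sum_Ico_le_of_mul_le_mul
    (hsum : ∑ x ∈ range (k + 1), p x = ∑ x ∈ range (k + 1), b x)
    (hp : ∀ x ≤ k, 0 < p x) (hb : ∀ x, 0 ≤ b x)
    (hratio : ∀ x < k, p (x + 1) * b x ≤ p x * b (x + 1)) (t : ℕ) :
    ∑ x ∈ Ico t (k + 1), p x ≤ ∑ x ∈ Ico t (k + 1), b x := by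
  obtain ⟨m, hm, hbelow, habove⟩ := exists_single_crossing fun x hx =>
    succ_le_of_mul_le_mul (hp x hx.le) (hb _) (hratio x hx)
  exact sum_Ico_le_of_single_crossing hsum hm hbelow habove t

theorem sum_mul_le_sum_mul_of_sum_Ico_le
    (hsum : ∑ x ∈ range (k + 1), p x = ∑ x ∈ range (k + 1), b x)
    (htail : ∀ t, ∑ x ∈ Ico t (k + 1), p x ≤ ∑ x ∈ Ico t (k + 1), b x)
    {f : ℕ → ℝ} (hf : Monotone f) :
    ∑ x ∈ range (k + 1), p x * f x ≤ ∑ x ∈ range (k + 1), b x * f x := by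
  have hhead : ∀ t ≤ k + 1, ∑ x ∈ range t, b x ≤ ∑ x ∈ range t, p x := fun t ht => by
    have := sum_range_add_sum_Ico p ht
    have := sum_range_add_sum_Ico b ht
    linarith [htail t]
  simp only [mul_comm _ (f _)]
  have hp := sum_range_by_parts f p (k + 1)
  have hb := sum_range_by_parts f b (k + 1)
  simp only [smul_eq_mul, Nat.add_sub_cancel] at hp hb
  rw [hp, hb, hsum]
  refine sub_le_sub_left (sum_le_sum fun i hi => ?_) _
  exact mul_le_mul_of_nonneg_left (hhead (i + 1) (by simp at hi; omega))
    (sub_nonneg.2 (hf i.le_succ))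

end SingleCrossing

noncomputable def hypergeomPMF (n k x : ℕ) : ℝ :=
  ((k.choose x * (n - k).choose (k - x) : ℕ) : ℝ) / n.choose k

noncomputable def binomialPMF (k : ℕ) (q : ℝ) (y : ℕ) : ℝ :=
  k.choose y * q ^ y * (1 - q) ^ (k - y)

theorem sum_hypergeomPMF {n k : ℕ} (hkn : k ≤ n) :
    ∑ x ∈ range (k + 1), hypergeomPMF n k x = 1 := by
  have hvandermonde : ∑ x ∈ range (k + 1), k.choose x * (n - k).choose (k - x) = n.choose k := by
    have h := Nat.add_choose_eq k (n - k) k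
    rw [Nat.add_sub_cancel' hkn, Nat.sum_antidiagonal_eq_sum_range_succ_mk] at h
    exact h.symm
  have hN : (n.choose k : ℝ) ≠ 0 := by exact_mod_cast (Nat.choose_pos hkn).ne'
  simp only [hypergeomPMF]
  rw [← sum_div, ← Nat.cast_sum, hvandermonde, div_self hN]

theorem hypergeomPMF_pos {n k x : ℕ} (hnk : 2 * k ≤ n) (hx : x ≤ k) : 0 < hypergeomPMF n k x := by
  have hnum : 0 < k.choose x * (n - k).choose (k - x) :=
    Nat.mul_pos (Nat.choose_pos hx) (Nat.choose_pos (by omega))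
  have hN : 0 < n.choose k := Nat.choose_pos (by omega)
  unfold hypergeomPMF
  positivity

theorem sum_binomialPMF (k : ℕ) (q : ℝ) : ∑ y ∈ range (k + 1), binomialPMF k q y = 1 := by
  have h := add_pow q (1 - q) k
  rw [add_sub_cancel, one_pow] at h
  rw [h]
  exact sum_congr rfl fun y _ => by unfold binomialPMF; ring

theorem binomialPMF_nonneg {q : ℝ} (hq0 : 0 ≤ q) (hq1 : q ≤ 1) (k y : ℕ) :
    0 ≤ binomialPMF k q y :=
  mul_nonneg (mul_nonneg (Nat.cast_nonneg _) (pow_nonneg hq0 _)) (pow_nonneg (sub_nonneg.2 hq1) _)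

theorem sum_binomialPMF_mul_exp (k : ℕ) (q s : ℝ) :
    ∑ y ∈ range (k + 1), binomialPMF k q y * Real.exp (s * y) = (1 + q * (Real.exp s - 1)) ^ k := by
  have h := add_pow (q * Real.exp s) (1 - q) k
  rw [show q * Real.exp s + (1 - q) = 1 + q * (Real.exp s - 1) by ring] at h
  rw [h]
  refine sum_congr rfl fun y _ => ?_
  rw [mul_comm s, Real.exp_nat_mul, binomialPMF]
  ring

theorem Nat.sub_mul_choose_le_mul_choose_succ {m k j : ℕ} (hj : j < k) (hk : k ≤ m) :
    (m - k) * m.choose j ≤ k * m.choose (j + 1) := by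
  refine Nat.le_of_mul_le_mul_right (c := j + 1) ?_ j.succ_pos
  calc (m - k) * m.choose j * (j + 1) = m.choose j * ((m - k) * (j + 1)) := by ring
    _ ≤ m.choose j * (k * (m - j)) := by
      refine Nat.mul_le_mul_left _ ?_
      calc (m - k) * (j + 1) ≤ (m - k) * k := Nat.mul_le_mul_left _ hj
        _ ≤ (m - j) * k := Nat.mul_le_mul_right _ (by omega)
        _ = k * (m - j) := mul_comm _ _
    _ = k * m.choose (j + 1) * (j + 1) := by rw [mul_assoc, Nat.choose_succ_right_eq]; ring

theorem hypergeomPMF_succ_mul_binomialPMF_le {n k x : ℕ} (hnk : 2 * k ≤ n) (hx : x < k) :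
    hypergeomPMF n k (x + 1) * binomialPMF k (k / (n - k)) x ≤
      hypergeomPMF n k x * binomialPMF k (k / (n - k)) (x + 1) := by
  set q : ℝ := k / (n - k) with hq
  have hnk' : (2 * k : ℝ) ≤ n := by exact_mod_cast hnk
  have hk : (0 : ℝ) < k := by exact_mod_cast (by omega : 0 < k)
  have hpos : (0 : ℝ) < n - k := by linarith
  have hq0 : 0 ≤ q := div_nonneg hk.le hpos.le
  have h1q : 1 - q = (n - 2 * k) / (n - k) := by rw [hq]; field_simp; ring
  have hq1 : 0 ≤ 1 - q := by rw [h1q]; exact div_nonneg (by linarith) hpos.le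
  have hsucc : k - x = (k - (x + 1)) + 1 := by omega
  have hchoose : ((n - k).choose (k - (x + 1)) : ℝ) * (1 - q) ≤ (n - k).choose (k - x) * q := by
    have h := Nat.sub_mul_choose_le_mul_choose_succ (m := n - k) (k := k) (j := k - (x + 1))
      (by omega) (by omega)
    rw [← hsucc] at h
    have h' := (Nat.cast_le (α := ℝ)).2 h
    rw [Nat.cast_mul, Nat.cast_mul, Nat.cast_sub (by omega), Nat.cast_sub (by omega)] at h'
    rw [h1q, hq, mul_div_assoc', mul_div_assoc', div_le_div_iff_of_pos_right hpos]
    linarith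
  have hc : 0 ≤ (k.choose (x + 1) * k.choose x : ℝ) * q ^ x * (1 - q) ^ (k - (x + 1)) / n.choose k :=
    by positivity
  unfold hypergeomPMF binomialPMF
  rw [pow_succ q, show (1 - q) ^ (k - x) = (1 - q) ^ (k - (x + 1)) * (1 - q) by
    rw [← pow_succ, ← hsucc]]
  push_cast
  calc _ = ((k.choose (x + 1) * k.choose x : ℝ) * q ^ x * (1 - q) ^ (k - (x + 1)) / n.choose k) *
        ((n - k).choose (k - (x + 1)) * (1 - q)) := by ring
    _ ≤ ((k.choose (x + 1) * k.choose x : ℝ) * q ^ x * (1 - q) ^ (k - (x + 1)) / n.choose k) *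
        ((n - k).choose (k - x) * q) := mul_le_mul_of_nonneg_left hchoose hc
    _ = _ := by ring

/-- Stochastic dominance of `X ∼ Hypergeometric(n, k, k)` by `Y ∼ Binomial(k, k/(n-k))`
when `n ≥ 2k`: (i) tail dominance `P(X ≥ t) ≤ P(Y ≥ t)` for every `t`;
(ii) `E[f(X)] ≤ E[f(Y)]` for every nondecreasing `f`;
(iii) in particular the MGF bound `E[e^{sX}] ≤ (1 + (k/(n-k))(e^s - 1))^k` for `s ≥ 0`. -/
theorem stmt_16 (n k : ℕ) (hnk : 2 * k ≤ n) :
    (∀ t : ℕ,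
      ∑ x ∈ (Finset.range (k + 1)).filter (fun x => t ≤ x),
          ((k.choose x * (n - k).choose (k - x) : ℕ) : ℝ) / (n.choose k) ≤
      ∑ y ∈ (Finset.range (k + 1)).filter (fun y => t ≤ y),
          (k.choose y : ℝ) * ((k : ℝ) / (n - k)) ^ y *
            (1 - (k : ℝ) / (n - k)) ^ (k - y)) ∧
    (∀ f : ℕ → ℝ, Monotone f →
      ∑ x ∈ Finset.range (k + 1),
          (((k.choose x * (n - k).choose (k - x) : ℕ) : ℝ) / (n.choose k)) * f x ≤
      ∑ y ∈ Finset.range (k + 1),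
          ((k.choose y : ℝ) * ((k : ℝ) / (n - k)) ^ y *
            (1 - (k : ℝ) / (n - k)) ^ (k - y)) * f y) ∧
    (∀ s : ℝ, 0 ≤ s →
      ∑ x ∈ Finset.range (k + 1),
          (((k.choose x * (n - k).choose (k - x) : ℕ) : ℝ) / (n.choose k)) *
            Real.exp (s * x) ≤
      (1 + (k : ℝ) / (n - k) * (Real.exp s - 1)) ^ k) := by
  have hkn : (k : ℝ) ≤ n - k := by
    have : (2 * k : ℝ) ≤ n := by exact_mod_cast hnk
    linarith
  have hq0 : 0 ≤ (k : ℝ) / (n - k) := div_nonneg k.cast_nonneg (k.cast_nonneg.trans hkn)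
  have hq1 : (k : ℝ) / (n - k) ≤ 1 := div_le_one_of_le₀ hkn (k.cast_nonneg.trans hkn)
  have hsum : ∑ x ∈ range (k + 1), hypergeomPMF n k x =
      ∑ x ∈ range (k + 1), binomialPMF k (k / (n - k)) x := by
    rw [sum_hypergeomPMF (by omega), sum_binomialPMF]
  have htail := sum_Ico_le_of_mul_le_mul hsum (fun x hx => hypergeomPMF_pos hnk hx)
    (binomialPMF_nonneg hq0 hq1 k) (fun x hx => hypergeomPMF_succ_mul_binomialPMF_le hnk hx)
  have hmono : ∀ f : ℕ → ℝ, Monotone f → ∑ x ∈ range (k + 1), hypergeomPMF n k x * f x ≤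
      ∑ x ∈ range (k + 1), binomialPMF k (k / (n - k)) x * f x :=
    fun f hf => sum_mul_le_sum_mul_of_sum_Ico_le hsum htail hf
  refine ⟨fun t => ?_, hmono, fun s hs => ?_⟩
  · rw [range_eq_Ico, Ico_filter_le, zero_max]
    exact htail t
  · rw [← sum_binomialPMF_mul_exp]
    exact hmono _ fun a b hab => Real.exp_le_exp.2 (by gcongr)
end

section
/- In the hypergraphic planted clique detection problem with $\kappa = N^{\beta}$, $0 < \beta < 1/2$: for any polynomial $f$ of the hyperedge indicators of degree at most $D \leq C\log N$ satisfying $\mathbb{E}_{H_0}f(G) = 0$ and $\mathbb{E}_{H_0}f^2(G) = 1$, one has $\mathbb{E}_{H_1}f(G) = O(1)$. Equivalently, $\sum_{\alpha: 0 < |\alpha| \leq D} (\kappa/N)^{2|V(\alpha)|} = O(1)$, where the sum ranges over nonempty sets $\alpha$ of hyperedges and $V(\alpha)$ is the set of vertices appearing in $\alpha$. -/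
/-!
Group the hyperedge sets `α` by `(k, m) = (|V(α)|, |α|)`. A class contains at most `N^k k^(d m)`
sets, each contributing `N^(2k(β-1))`. Since `m ≤ k^d` and `m ≤ C log N`, the factor `k^(d m)` is
only `N^(o(k))`, so for `k ≥ 2` a class contributes at most `N^(2β-1)`; there are `O(log² N)`
classes, hence the sum is eventually at most `1`.
-/

open Finset Filter Real Asymptotics

section Hypergraph

variable {V : Type*} [DecidableEq V] {d : ℕ}

theorem card_filter_subset_le_choose [Fintype V] (S : Finset V) :
    #{s : {s : Finset V // s.card = d} | s.1 ⊆ S} ≤ (#S).choose d := by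
  rw [← card_powersetCard]
  refine card_le_card_of_injOn Subtype.val (fun s hs => ?_) Subtype.val_injective.injOn
  exact mem_powersetCard.2 ⟨(mem_filter.1 hs).2, s.2⟩

theorem card_le_choose_card_biUnion [Fintype V] (α : Finset {s : Finset V // s.card = d}) :
    #α ≤ (#(α.biUnion Subtype.val)).choose d := by
  refine (card_le_card fun s hs => ?_).trans (card_filter_subset_le_choose _)
  exact mem_filter.2 ⟨mem_univ s, subset_biUnion_of_mem Subtype.val hs⟩

theorem card_biUnion_le_mul_card (α : Finset {s : Finset V // s.card = d}) :
    #(α.biUnion Subtype.val) ≤ d * #α :=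
  (card_biUnion_le_card_mul α Subtype.val d fun s _ => s.2.le).trans_eq (mul_comm _ _)

theorem le_card_biUnion {α : Finset {s : Finset V // s.card = d}} (hα : α.Nonempty) :
    d ≤ #(α.biUnion Subtype.val) := by
  obtain ⟨s, hs⟩ := hα
  exact s.2.symm.le.trans (card_le_card (subset_biUnion_of_mem Subtype.val hs))

theorem card_filter_card_biUnion_eq_le [Fintype V] (k m : ℕ) :
    #{α : Finset {s : Finset V // s.card = d} | #(α.biUnion Subtype.val) = k ∧ #α = m}
      ≤ Fintype.card V ^ k * k ^ (d * m) := by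
  set A := ({α : Finset {s : Finset V // s.card = d} |
    #(α.biUnion Subtype.val) = k ∧ #α = m} : Finset _)
  have hmaps : ∀ α ∈ A, α.biUnion Subtype.val ∈ (univ : Finset V).powersetCard k :=
    fun α hα => mem_powersetCard.2 ⟨subset_univ _, (mem_filter.1 hα).2.1⟩
  have hfiber : ∀ S ∈ (univ : Finset V).powersetCard k,
      #{α ∈ A | α.biUnion Subtype.val = S} ≤ (k.choose d).choose m := by
    intro S hS
    have hsub : {α ∈ A | α.biUnion Subtype.val = S} ⊆
        ({s : {s : Finset V // s.card = d} | s.1 ⊆ S} : Finset _).powersetCard m := by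
      intro α hα
      obtain ⟨hαA, rfl⟩ := mem_filter.1 hα
      refine mem_powersetCard.2 ⟨fun s hs => ?_, (mem_filter.1 hαA).2.2⟩
      exact mem_filter.2 ⟨mem_univ s, subset_biUnion_of_mem Subtype.val hs⟩
    rw [← (mem_powersetCard.1 hS).2]
    exact (card_le_card hsub).trans_eq (card_powersetCard _ _) |>.trans
      (Nat.choose_le_choose m (card_filter_subset_le_choose S))
  calc #A ≤ (k.choose d).choose m * #((univ : Finset V).powersetCard k) :=
        card_le_mul_card_image_of_maps_to hmaps _ hfiber
    _ ≤ (k ^ d) ^ m * Fintype.card V ^ k := by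
        rw [card_powersetCard, card_univ]
        exact Nat.mul_le_mul
          ((Nat.choose_le_pow _ _).trans (Nat.pow_le_pow_left (Nat.choose_le_pow _ _) m))
          (Nat.choose_le_pow _ _)
    _ = _ := by rw [← pow_mul, mul_comm]

theorem sum_pow_card_biUnion_le [Fintype V] (T : Finset (Finset {s : Finset V // s.card = d}))
    (P : Finset (ℕ × ℕ)) (hP : ∀ α ∈ T, (#(α.biUnion Subtype.val), #α) ∈ P) {q b : ℝ}
    (hq : 0 ≤ q)
    (hb : ∀ p ∈ P, (Fintype.card V : ℝ) ^ p.1 * (p.1 : ℝ) ^ (d * p.2) * q ^ (2 * p.1) ≤ b) :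
    ∑ α ∈ T, q ^ (2 * #(α.biUnion Subtype.val)) ≤ #P * b := by
  rw [← sum_fiberwise_of_maps_to hP, ← nsmul_eq_mul]
  refine sum_le_card_nsmul _ _ _ fun p hp => ?_
  obtain ⟨k, m⟩ := p
  have hfiber : {α ∈ T | (#(α.biUnion Subtype.val), #α) = (k, m)} ⊆
      ({α : Finset {s : Finset V // s.card = d} | #(α.biUnion Subtype.val) = k ∧ #α = m} :
        Finset _) :=
    fun α hα => mem_filter.2 ⟨mem_univ α, Prod.mk.inj (mem_filter.1 hα).2⟩
  calc ∑ α ∈ T with (#(α.biUnion Subtype.val), #α) = (k, m),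
        q ^ (2 * #(α.biUnion Subtype.val))
      = #{α ∈ T | (#(α.biUnion Subtype.val), #α) = (k, m)} * q ^ (2 * k) := by
        rw [← nsmul_eq_mul, ← sum_const]
        exact sum_congr rfl fun α hα => by rw [(Prod.mk.inj (mem_filter.1 hα).2).1]
    _ ≤ ((Fintype.card V ^ k * k ^ (d * m) : ℕ) : ℝ) * q ^ (2 * k) := by
        gcongr
        exact (card_le_card hfiber).trans (card_filter_card_biUnion_eq_le k m)
    _ ≤ b := by push_cast; exact hb _ hp

end Hypergraph

theorem eventually_mul_log_le {d : ℕ} (hd : 0 < d) {C ε : ℝ} (hC : 0 < C) (hε : 0 < ε) :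
    ∀ᶠ L in atTop, ∀ k m : ℕ, m ≤ k ^ d → (m : ℝ) ≤ C * L → k ≤ d * m →
      d * m * log k ≤ ε * k * L := by
  have hdC : 0 < (d : ℝ) * C := by positivity
  have ho : (fun L => log (d * C * L) ^ d) =o[atTop] id :=
    (isLittleO_pow_log_id_atTop.comp_tendsto (tendsto_id.const_mul_atTop hdC)).trans_isBigO
      (isBigO_const_mul_self _ _ _)
  have hc : 0 < ε ^ d / ((d : ℝ) ^ d * C ^ (d - 1)) := by positivity
  filter_upwards [ho.bound hc, eventually_ge_atTop 0] with L hL hL0 k m hmk hmL hkm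
  rcases Nat.eq_zero_or_pos m with rfl | hm
  · simp only [CharP.cast_eq_zero, mul_zero, zero_mul]
    positivity
  have hk : 0 < k := Nat.pos_of_ne_zero fun hk => by
    rw [hk, zero_pow hd.ne'] at hmk
    omega
  have hlogk : 0 ≤ log k := log_nonneg (by exact_mod_cast hk)
  have hlog_pow : log k ^ d ≤ ε ^ d / ((d : ℝ) ^ d * C ^ (d - 1)) * L := by
    have hkL : (k : ℝ) ≤ d * C * L := by
      calc (k : ℝ) ≤ d * m := by exact_mod_cast hkm
        _ ≤ d * C * L := by rw [mul_assoc]; gcongr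
    rw [id, Real.norm_of_nonneg hL0] at hL
    exact (pow_le_pow_left₀ hlogk (log_le_log (by exact_mod_cast hk) hkL) d).trans
      ((le_norm_self _).trans hL)
  have hm_pow : (m : ℝ) ^ d ≤ (C * L) ^ (d - 1) * k ^ d := by
    rw [← pow_sub_one_mul hd.ne']
    exact mul_le_mul (pow_le_pow_left₀ (Nat.cast_nonneg m) hmL _) (by exact_mod_cast hmk)
      (by positivity) (by positivity)
  refine (pow_le_pow_iff_left₀ (by positivity) (by positivity) hd.ne').1 ?_
  calc (d * m * log k) ^ d = d ^ d * m ^ d * log k ^ d := by ring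
    _ ≤ d ^ d * ((C * L) ^ (d - 1) * k ^ d) * (ε ^ d / ((d : ℝ) ^ d * C ^ (d - 1)) * L) := by
        gcongr
    _ = (ε * k * L) ^ d := by
        rw [mul_pow, mul_pow, ← pow_sub_one_mul hd.ne' L]
        field_simp
        ring

theorem pow_mul_pow_mul_pow_le_rpow {N β : ℝ} (hN : 1 ≤ N) (hβ : β < 1 / 2) {d k m : ℕ}
    (hk : 2 ≤ k) (hkey : d * m * log k ≤ (1 - 2 * β) / 2 * k * log N) :
    N ^ k * (k : ℝ) ^ (d * m) * (N ^ β / N) ^ (2 * k) ≤ N ^ (2 * β - 1) := by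
  have hN0 : 0 < N := by linarith
  have hk0 : (0 : ℝ) < k := by positivity
  rw [← log_le_log_iff (by positivity) (by positivity), log_mul (by positivity) (by positivity),
    log_mul (by positivity) (by positivity), log_pow, log_pow, log_pow, log_div (by positivity)
    hN0.ne', log_rpow hN0, log_rpow hN0]
  have hL : 0 ≤ log N := log_nonneg hN
  have hk2 : (2 : ℝ) ≤ k := by exact_mod_cast hk
  push_cast
  linarith [mul_nonneg (mul_nonneg (by linarith : (0 : ℝ) ≤ 1 - 2 * β) hL) (sub_nonneg.2 hk2)]

open Classical in
theorem eventually_sum_le_one {d : ℕ} (hd : 2 ≤ d) {β C : ℝ} (hβ : β < 1 / 2) (hC : 0 < C) :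
    ∀ᶠ N : ℕ in atTop,
      ∑ α ∈ (univ : Finset (Finset {s : Finset (Fin N) // s.card = d})).filter
          (fun α => α.Nonempty ∧ (α.card : ℝ) ≤ C * log N),
        ((N : ℝ) ^ β / N) ^ (2 * (α.biUnion fun s => s.1).card) ≤ 1 := by
  have hε : 0 < 1 - 2 * β := by linarith
  have hlog : Tendsto (fun N : ℕ => log N) atTop atTop :=
    tendsto_log_atTop.comp tendsto_natCast_atTop_atTop
  have hpoly := ((isLittleO_pow_exp_pos_mul_atTop 2 hε).const_mul_left
    ((d * C + 1) * (C + 1))).bound one_pos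
  filter_upwards [hlog.eventually (eventually_mul_log_le (d := d) (by omega) hC (half_pos hε)),
    hlog.eventually (eventually_ge_atTop 1), hlog.eventually hpoly] with N hkey hL hpolyN
  have hN : (1 : ℝ) ≤ N := Nat.one_le_cast.2 <| Nat.pos_of_ne_zero fun h => by
    simp only [h, CharP.cast_eq_zero, log_zero] at hL
    linarith
  set L := log (N : ℝ)
  set D := ⌊C * L⌋₊
  set P := (range (d * D + 1) ×ˢ range (D + 1)).filter
    (fun p => 2 ≤ p.1 ∧ p.2 ≤ p.1 ^ d ∧ p.1 ≤ d * p.2)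
  have hmaps : ∀ α ∈ (univ : Finset (Finset {s : Finset (Fin N) // s.card = d})).filter
      (fun α => α.Nonempty ∧ (α.card : ℝ) ≤ C * L), (#(α.biUnion Subtype.val), #α) ∈ P := by
    intro α hα
    obtain ⟨-, hne, hm⟩ := mem_filter.1 hα
    have hmD : #α ≤ D := Nat.le_floor hm
    have hkm := card_biUnion_le_mul_card α
    refine mem_filter.2 ⟨mem_product.2 ⟨mem_range.2 ?_, mem_range.2 (by omega)⟩,
      hd.trans (le_card_biUnion hne),
      (card_le_choose_card_biUnion α).trans (Nat.choose_le_pow _ _), hkm⟩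
    exact Nat.lt_succ_of_le (hkm.trans (Nat.mul_le_mul_left d hmD))
  have hterm : ∀ p ∈ P, (Fintype.card (Fin N) : ℝ) ^ p.1 * (p.1 : ℝ) ^ (d * p.2) *
      ((N : ℝ) ^ β / N) ^ (2 * p.1) ≤ (N : ℝ) ^ (2 * β - 1) := by
    rintro ⟨k, m⟩ hp
    obtain ⟨hp, hk, hmk, hkm⟩ := mem_filter.1 hp
    have hmD : m ≤ D := Nat.lt_succ_iff.1 (mem_range.1 (mem_product.1 hp).2)
    have hmL : (m : ℝ) ≤ C * L := (Nat.cast_le.2 hmD).trans (Nat.floor_le (by positivity))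
    rw [Fintype.card_fin]
    exact pow_mul_pow_mul_pow_le_rpow hN hβ hk (hkey k m hmk hmL hkm)
  have hcard : (#P : ℝ) ≤ (d * C + 1) * (C + 1) * L ^ 2 := by
    have hP : #P ≤ (d * D + 1) * (D + 1) :=
      (card_filter_le _ _).trans_eq (by rw [card_product, card_range, card_range])
    have hD : (D : ℝ) ≤ C * L := Nat.floor_le (by positivity)
    calc (#P : ℝ) ≤ (d * D + 1) * (D + 1) := by exact_mod_cast hP
      _ ≤ ((d * C + 1) * L) * ((C + 1) * L) := by
          gcongr <;> nlinarith
      _ = (d * C + 1) * (C + 1) * L ^ 2 := by ring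
  calc _ ≤ #P * (N : ℝ) ^ (2 * β - 1) :=
        sum_pow_card_biUnion_le _ P hmaps (by positivity) hterm
    _ ≤ (d * C + 1) * (C + 1) * L ^ 2 * exp (-((1 - 2 * β) * L)) := by
        rw [rpow_def_of_pos (by positivity)]
        gcongr
        exact le_of_eq (by ring)
    _ ≤ exp ((1 - 2 * β) * L) * exp (-((1 - 2 * β) * L)) := by
        gcongr
        exact (le_norm_self _).trans (by simpa using hpolyN)
    _ = 1 := by rw [← exp_add, add_neg_cancel, exp_zero]

open Classical in
theorem stmt_17_general (d : ℕ) (hd : 2 ≤ d) (β : ℝ) (hβ : β < 1 / 2)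
    (C : ℝ) (hC : 0 < C) :
    ∃ B : ℝ, ∀ N : ℕ, 1 ≤ N →
      ∑ α ∈ (Finset.univ :
            Finset (Finset {s : Finset (Fin N) // s.card = d})).filter
          (fun α => α.Nonempty ∧ (α.card : ℝ) ≤ C * Real.log N),
        ((N : ℝ) ^ β / N) ^ (2 * (α.biUnion fun s => s.1).card) ≤ B := by
  obtain ⟨B, hB⟩ :=
    (isBoundedUnder_of_eventually_le (eventually_sum_le_one hd hβ hC)).bddAbove_range
  exact ⟨B, fun N _ => hB ⟨N, rfl⟩⟩

open Classical in
/-- Failure of low-degree polynomial tests for hypergraphic planted clique with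
`κ = N^β`, `0 < β < 1/2`: for degree `D ≤ C log N`, the squared norm of the degree-`D`
truncated likelihood ratio minus one, namely
`∑_{α : 0 < |α| ≤ D} (κ/N)^{2|V(α)|}` (sum over nonempty sets `α` of hyperedges, with
`V(α)` the set of vertices appearing in `α`), is `O(1)`; equivalently any degree-`D`
polynomial `f` with `E_{H₀} f = 0`, `E_{H₀} f² = 1` has `E_{H₁} f = O(1)`. -/
theorem stmt_17 (d : ℕ) (hd : 2 ≤ d) (β : ℝ) (hβ0 : 0 < β) (hβ : β < 1 / 2)
    (C : ℝ) (hC : 0 < C) :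
    ∃ B : ℝ, ∀ N : ℕ, 1 ≤ N →
      ∑ α ∈ (Finset.univ :
            Finset (Finset {s : Finset (Fin N) // s.card = d})).filter
          (fun α => α.Nonempty ∧ (α.card : ℝ) ≤ C * Real.log N),
        ((N : ℝ) ^ β / N) ^ (2 * (α.biUnion fun s => s.1).card) ≤ B :=
  stmt_17_general d hd β hβ C hC
end
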